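/- arXiv:1207.0043 — 4 statements merged into one kernel-verified Lean document; each statement's English description precedes it below -/
import Mathlib

section
/- If the 3-CNF formula φ is unsatisfiable, then every stable in-arborescence rooted at r in the network G(φ,L) contains none of the padding nodes d₁,…,d_L; in particular, every stable in-arborescence rooted at r has at most 4N+5M+2 nodes. -/
/-! A padding node has no in-arcs, so if it lies in `T` its tree arc goes to `s_M`, and
validity of that arc forces the tree path from `s_M` to avoid `d₀`. Such a path runs
`s_M → q → t_M → s_{M-1} → ⋯ → t_1 → a_N → ⋯ → b_1 → r`, crossing every clause gadget through
some arc `q_{z,j} → t_j` and every variable gadget through `u^T_i` or `u^F_i`. Read `x_i` as true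
iff the path uses `u^T_i`. Since tree paths are unique, validity of `(q_{z,j}, t_j)` says that the
rest of the path avoids `D(q_{z,j})`, the node that would falsify the `z`-th literal of `C_j`;
so this assignment satisfies `φ`. The size bound is then a count of the remaining nodes. -/

/-- `p` is a directed path from `v` to `s` in the digraph with arc relation `A`:
a nonempty list of pairwise distinct vertices starting at `v`, ending at `s`,
in which every consecutive pair is an arc. -/
def IsPath {V : Type} (A : V → V → Prop) (p : List V) (v s : V) : Prop :=
  p.head? = some v ∧ p.getLast? = some s ∧ p.Chain' A ∧ p.Nodup

/-- The arc relation of an arc set `T`. -/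
def arcRel {V : Type} (T : Set (V × V)) : V → V → Prop := fun a b => (a, b) ∈ T

/-- The vertex set of the subgraph with arc set `T`, together with the root `r`. -/
def vertsOf {V : Type} (r : V) (T : Set (V × V)) : Set V :=
  insert r {v | ∃ e ∈ T, v = e.1 ∨ v = e.2}

/-- `T` is an in-arborescence rooted at `r`: every node of `V(T)` has a unique
directed path in `T` to `r`. -/
def IsInArb {V : Type} (r : V) (T : Set (V × V)) : Prop :=
  ∀ v ∈ vertsOf r T, ∃! p : List V, IsPath (arcRel T) p v r

/-- `w` is valid for `u` w.r.t. the in-arborescence `T`: `(u,w)` is an arc of the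
network, `w ∈ V(T)`, and the path in `T` from `w` to `r` contains no node of `D u`. -/
def ValidFor {V : Type} (adj : V → V → Prop) (D : V → Set V) (r : V) (T : Set (V × V))
    (u w : V) : Prop :=
  adj u w ∧ ∃ p, IsPath (arcRel T) p w r ∧ ∀ x ∈ D u, x ∉ p

/-- The in-arborescence `T` is stable: for every arc `(u,w)` of `T`, `w` is valid for
`u` and `u` prefers `w` to every other node that is valid for `u`. -/
def StableArb {V : Type} (adj : V → V → Prop) (pref : V → V → V → Prop) (D : V → Set V)
    (r : V) (T : Set (V × V)) : Prop :=
  ∀ e ∈ T, ValidFor adj D r T e.1 e.2 ∧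
    ∀ w', ValidFor adj D r T e.1 w' → w' ≠ e.2 → pref e.1 e.2 w'

/-- The nodes of the reduction graph `G(φ,L)`: the sink `r`; dummy/padding nodes
`d₀,…,d_L`; Variable-Gadget nodes `aᵢ, u^Tᵢ, u^Fᵢ, bᵢ`; Clause-Gadget nodes
`sⱼ, q_{z,j}, tⱼ`. -/
inductive RVert (N M L : ℕ) : Type where
  | sink : RVert N M L
  | dummy : Fin (L + 1) → RVert N M L
  | a : Fin N → RVert N M L
  | uT : Fin N → RVert N M L
  | uF : Fin N → RVert N M L
  | b : Fin N → RVert N M L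
  | s : Fin M → RVert N M L
  | q : Fin 3 → Fin M → RVert N M L
  | t : Fin M → RVert N M L
  deriving DecidableEq, Fintype

/-- The out-neighbours of each node of `G(φ,L)`, listed in order of preference
(most preferred first). -/
def outList (N M L : ℕ) : RVert N M L → List (RVert N M L)
  | .sink => []
  | .dummy i =>
      if i = (0 : Fin (L + 1)) then [.sink]
      else if h : 0 < M then [.s ⟨M - 1, by omega⟩] else []
  | .a i => [.uT i, .uF i]
  | .uT i => [.a i, .b i]
  | .uF i => [.a i, .b i]
  | .b i =>
      if h : i.val = 0 then [.sink]
      else [.a ⟨i.val - 1, by have := i.isLt; omega⟩]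
  | .s j => [.q 0 j, .q 1 j, .q 2 j]
  | .q _ j => [.t j, .dummy 0]
  | .t j =>
      if h : j.val = 0 then (if h2 : 0 < N then [.a ⟨N - 1, by omega⟩] else [])
      else [.s ⟨j.val - 1, by have := j.isLt; omega⟩]

/-- The adjacency relation of `G(φ,L)`. -/
def adjR {N M L : ℕ} (v w : RVert N M L) : Prop := w ∈ outList N M L v

/-- The preference relation of `G(φ,L)`: `v` prefers `w` to `w'` iff `w` occurs
earlier than `w'` in `v`'s preference list. -/
def prefR {N M L : ℕ} (v w w' : RVert N M L) : Prop :=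
  w ∈ outList N M L v ∧ w' ∈ outList N M L v ∧
    (outList N M L v).idxOf w < (outList N M L v).idxOf w'

/-- The filtering lists of `G(φ,L)`, where `C j z = (i, pol)` means the `z`-th literal
of clause `Cⱼ` involves variable `xᵢ` with polarity `pol` (`true` = positive). -/
def filtR {N M L : ℕ} (C : Fin M → Fin 3 → Fin N × Bool) : RVert N M L → Set (RVert N M L)
  | .sink => ∅
  | .dummy _ => {.dummy 0}
  | .a i => {.a i}
  | .uT i => {.uT i}
  | .uF i => {.uF i}
  | .b i => {.b i}
  | .s j => {.s j}
  | .q z j => if (C j z).2 then {.uF (C j z).1} else {.uT (C j z).1}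
  | .t _ => {.dummy 0}

/-- The 3-CNF formula encoded by `C` is satisfiable. -/
def SatCNF {N M : ℕ} (C : Fin M → Fin 3 → Fin N × Bool) : Prop :=
  ∃ σ : Fin N → Bool, ∀ j, ∃ z, σ (C j z).1 = (C j z).2

section Arborescence

variable {V : Type} {r v w : V} {p : List V}

theorem IsPath.exists_cons_cons {R : V → V → Prop} (h : IsPath R p v r) (hvr : v ≠ r) :
    ∃ w rest, p = v :: w :: rest ∧ R v w ∧ IsPath R (w :: rest) w r := by
  obtain ⟨hhead, hlast, hchain, hnodup⟩ := h
  rcases p with _ | ⟨x, _ | ⟨w, rest⟩⟩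
  · simp at hhead
  · simp_all
  · obtain rfl : x = v := by simpa using hhead
    rw [List.Chain', List.isChain_cons_cons] at hchain
    exact ⟨w, rest, rfl, hchain.1, rfl, by simpa using hlast, hchain.2, hnodup.of_cons⟩

theorem IsPath.mono {R S : V → V → Prop} (hRS : ∀ a b, R a b → S a b) (h : IsPath R p v r) :
    IsPath S p v r :=
  ⟨h.1, h.2.1, h.2.2.1.imp hRS, h.2.2.2⟩

theorem snd_mem_vertsOf {T : Set (V × V)} {u : V} (h : (u, w) ∈ T) : w ∈ vertsOf r T :=
  Or.inr ⟨_, h, Or.inr rfl⟩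

theorem StableArb.notMem_path {adj : V → V → Prop} {pref : V → V → V → Prop} {D : V → Set V}
    {T : Set (V × V)} (hstab : StableArb adj pref D r T) (harb : IsInArb r T) {u x : V}
    (he : (u, w) ∈ T) (hp : IsPath (arcRel T) p w r) (hx : x ∈ D u) : x ∉ p := by
  obtain ⟨-, p', hp', hD⟩ := (hstab _ he).1
  rw [(harb w (snd_mem_vertsOf he)).unique hp hp']
  exact hD x hx

end Arborescence

section Network

variable {N M L : ℕ}

-- The node of `D(q_{z,j})` when `ℓ` is the `z`-th literal of `C_j`: crossing the gadget of `ℓ.1`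
-- through it makes `ℓ` false (crossing through `u^T` sets the variable true).
def litNode (ℓ : Fin N × Bool) : RVert N M L := if ℓ.2 then .uF ℓ.1 else .uT ℓ.1

theorem filtR_q (C : Fin M → Fin 3 → Fin N × Bool) (z : Fin 3) (j : Fin M) :
    filtR C (.q z j) = {(litNode (C j z) : RVert N M L)} := by
  simp only [filtR, litNode]; split <;> rfl

theorem adjR_a {i : Fin N} {w : RVert N M L} (h : adjR (.a i) w) : w = .uT i ∨ w = .uF i := by
  simpa [adjR, outList] using h

theorem adjR_b_of_ne_zero {i : Fin N} (hi : i.val ≠ 0) {w : RVert N M L} (h : adjR (.b i) w) :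
    w = .a ⟨i - 1, by omega⟩ := by
  simpa [adjR, outList, hi] using h

theorem adjR_s {j : Fin M} {w : RVert N M L} (h : adjR (.s j) w) : ∃ z, w = .q z j := by
  simp only [adjR, outList, List.mem_cons, List.not_mem_nil, or_false] at h
  rcases h with h | h | h
  exacts [⟨0, h⟩, ⟨1, h⟩, ⟨2, h⟩]

theorem adjR_q {z : Fin 3} {j : Fin M} {w : RVert N M L} (h : adjR (.q z j) w) :
    w = .t j ∨ w = .dummy 0 := by
  simpa [adjR, outList] using h

theorem adjR_t_of_eq_zero {j : Fin M} (hj : j.val = 0) {w : RVert N M L} (h : adjR (.t j) w) :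
    ∃ i : Fin N, (∀ k, k ≤ i) ∧ w = .a i := by
  simp only [adjR, outList, hj, ↓reduceDIte] at h
  split at h
  · exact ⟨⟨N - 1, by omega⟩, fun k => Fin.le_def.mpr (by simp; omega), by simpa using h⟩
  · simp at h

theorem adjR_t_of_ne_zero {j : Fin M} (hj : j.val ≠ 0) {w : RVert N M L} (h : adjR (.t j) w) :
    w = .s ⟨j - 1, by omega⟩ := by
  simpa [adjR, outList, hj] using h

theorem adjR_dummy_of_ne_zero {i : Fin (L + 1)} (hi : i ≠ 0) {w : RVert N M L}
    (h : adjR (.dummy i) w) : ∃ j : Fin M, (∀ k, k ≤ j) ∧ w = .s j := by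
  simp only [adjR, outList, hi, ↓reduceIte] at h
  split at h
  · exact ⟨⟨M - 1, by omega⟩, fun k => Fin.le_def.mpr (by simp; omega), by simpa using h⟩
  · simp at h

theorem eq_zero_of_adjR_dummy {i : Fin (L + 1)} {v : RVert N M L} (h : adjR v (.dummy i)) :
    i = 0 := by
  cases v <;> simp only [adjR, outList] at h <;> (try split_ifs at h) <;> simp_all

-- Enumerates all nodes except the padding nodes `d₁,…,d_L`.
def gadgetNode : Fin 2 ⊕ Fin 4 × Fin N ⊕ (Fin 2 ⊕ Fin 3) × Fin M → RVert N M L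
  | .inl 0 => .sink
  | .inl 1 => .dummy 0
  | .inr (.inl (0, i)) => .a i
  | .inr (.inl (1, i)) => .uT i
  | .inr (.inl (2, i)) => .uF i
  | .inr (.inl (3, i)) => .b i
  | .inr (.inr (.inl 0, j)) => .s j
  | .inr (.inr (.inl 1, j)) => .t j
  | .inr (.inr (.inr z, j)) => .q z j

theorem ncard_le_of_dummy_notMem {S : Set (RVert N M L)}
    (hS : ∀ i : Fin (L + 1), i ≠ 0 → .dummy i ∉ S) : S.ncard ≤ 4 * N + 5 * M + 2 := by
  have hcover : S ⊆ Set.range gadgetNode := by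
    intro v hv
    cases v with
    | sink => exact ⟨.inl 0, rfl⟩
    | dummy i =>
      obtain rfl : i = 0 := by_contra fun h => hS i h hv
      exact ⟨.inl 1, rfl⟩
    | a i => exact ⟨.inr (.inl (0, i)), rfl⟩
    | uT i => exact ⟨.inr (.inl (1, i)), rfl⟩
    | uF i => exact ⟨.inr (.inl (2, i)), rfl⟩
    | b i => exact ⟨.inr (.inl (3, i)), rfl⟩
    | s j => exact ⟨.inr (.inr (.inl 0, j)), rfl⟩
    | t j => exact ⟨.inr (.inr (.inl 1, j)), rfl⟩
    | q z j => exact ⟨.inr (.inr (.inr z, j)), rfl⟩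
  calc S.ncard ≤ (Set.range gadgetNode).ncard := Set.ncard_le_ncard hcover (Set.toFinite _)
    _ ≤ Nat.card (Fin 2 ⊕ Fin 4 × Fin N ⊕ (Fin 2 ⊕ Fin 3) × Fin M) := by
      rw [← Nat.card_coe_set_eq]; exact Finite.card_range_le _
    _ = 4 * N + 5 * M + 2 := by simp; ring

theorem IsPath.through_varGadget {i : Fin N} {p : List (RVert N M L)}
    (hp : IsPath adjR p (.a i) .sink) :
    (.uT i ∈ p ∨ .uF i ∈ p) ∧
      ∃ rest, IsPath adjR (.b i :: rest) (.b i) .sink ∧ .b i :: rest ⊆ p := by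
  have hnodup := hp.2.2.2
  obtain ⟨u, rest₁, rfl, hau, hp₁⟩ := hp.exists_cons_cons (by simp)
  have hu := adjR_a hau
  obtain ⟨w, rest₂, hrest, huw, hp₂⟩ := hp₁.exists_cons_cons (by rcases hu with rfl | rfl <;> simp)
  cases hrest
  obtain rfl : w = .b i := by
    have hw : w = .a i ∨ w = .b i := by
      rcases hu with rfl | rfl <;> simpa [adjR, outList] using huw
    refine hw.resolve_left ?_
    rintro rfl
    simp at hnodup
  refine ⟨by rcases hu with rfl | rfl <;> simp, rest₂, hp₂, ?_⟩
  exact List.subset_cons_of_subset _ (List.subset_cons_self _ _)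

theorem IsPath.uT_mem_or_uF_mem {i : Fin N} {p : List (RVert N M L)}
    (hp : IsPath adjR p (.a i) .sink) : ∀ k ≤ i, .uT k ∈ p ∨ .uF k ∈ p := by
  obtain ⟨n, hn⟩ : ∃ n, i.val = n := ⟨_, rfl⟩
  induction n generalizing i p with
  | zero =>
    intro k hk
    obtain rfl : k = i := Fin.ext (by rw [Fin.le_def] at hk; omega)
    exact hp.through_varGadget.1
  | succ n ih =>
    intro k hk
    obtain ⟨hi, rest, hpb, hbp⟩ := hp.through_varGadget
    rcases eq_or_lt_of_le hk with rfl | hlt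
    · exact hi
    obtain ⟨w, rest', hrest, hbw, hpw⟩ := hpb.exists_cons_cons (by simp)
    cases hrest
    obtain rfl := adjR_b_of_ne_zero (by omega) hbw
    have hwp : _ :: rest' ⊆ p := fun x hx => hbp (List.mem_cons_of_mem _ hx)
    have hk' : k ≤ ⟨i - 1, by omega⟩ := Fin.le_def.mpr (by rw [Fin.lt_def] at hlt; simp; omega)
    exact (ih hpw (by simp [hn]) k hk').imp (fun h => hwp h) (fun h => hwp h)

variable {C : Fin M → Fin 3 → Fin N × Bool} {T : Set (RVert N M L × RVert N M L)}

theorem IsPath.through_clauseGadget (hsub : ∀ e ∈ T, adjR e.1 e.2) (harb : IsInArb .sink T)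
    (hstab : StableArb adjR prefR (filtR C) .sink T) {j : Fin M} {p : List (RVert N M L)}
    (hp : IsPath (arcRel T) p (.s j) .sink) (hd : .dummy 0 ∉ p) :
    ∃ z rest, IsPath (arcRel T) (.t j :: rest) (.t j) .sink ∧ .t j :: rest ⊆ p ∧
      litNode (C j z) ∉ .t j :: rest := by
  obtain ⟨q, rest₁, rfl, hsq, hp₁⟩ := hp.exists_cons_cons (by simp)
  obtain ⟨z, rfl⟩ := adjR_s (hsub _ hsq)
  obtain ⟨w, rest₂, hrest, hqw, hp₂⟩ := hp₁.exists_cons_cons (by simp)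
  cases hrest
  obtain rfl : w = .t j := (adjR_q (hsub _ hqw)).resolve_right (by rintro rfl; simp at hd)
  exact ⟨z, rest₂, hp₂, List.subset_cons_of_subset _ (List.subset_cons_self _ _),
    hstab.notMem_path harb hqw hp₂ (by simp [filtR_q])⟩

theorem IsPath.through_clauseGadgets (hsub : ∀ e ∈ T, adjR e.1 e.2) (harb : IsInArb .sink T)
    (hstab : StableArb adjR prefR (filtR C) .sink T) {j : Fin M} {p : List (RVert N M L)}
    (hp : IsPath (arcRel T) p (.s j) .sink) (hd : .dummy 0 ∉ p) :
    ∃ i : Fin N, (∀ k, k ≤ i) ∧ ∃ pv ⊆ p, IsPath (arcRel T) pv (.a i) .sink ∧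
      ∀ k ≤ j, ∃ z, litNode (C k z) ∉ pv := by
  obtain ⟨n, hn⟩ : ∃ n, j.val = n := ⟨_, rfl⟩
  induction n generalizing j p with
  | zero =>
    obtain ⟨z, rest, hpt, htp, hlit⟩ := hp.through_clauseGadget hsub harb hstab hd
    obtain ⟨w, rest', hrest, htw, hpw⟩ := hpt.exists_cons_cons (by simp)
    cases hrest
    obtain ⟨i, hi, rfl⟩ := adjR_t_of_eq_zero hn (hsub _ htw)
    refine ⟨i, hi, _, fun x hx => htp (List.mem_cons_of_mem _ hx), hpw, fun k hk => ?_⟩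
    obtain rfl : k = j := Fin.ext (by rw [Fin.le_def] at hk; omega)
    exact ⟨z, fun h => hlit (List.mem_cons_of_mem _ h)⟩
  | succ n ih =>
    obtain ⟨z, rest, hpt, htp, hlit⟩ := hp.through_clauseGadget hsub harb hstab hd
    obtain ⟨w, rest', hrest, htw, hpw⟩ := hpt.exists_cons_cons (by simp)
    cases hrest
    obtain rfl := adjR_t_of_ne_zero (by omega) (hsub _ htw)
    have hwp : _ :: rest' ⊆ p := fun x hx => htp (List.mem_cons_of_mem _ hx)
    obtain ⟨i, hi, pv, hpvw, hpv, hcl⟩ := ih hpw (fun h => hd (hwp h)) (by simp [hn])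
    refine ⟨i, hi, pv, List.Subset.trans hpvw hwp, hpv, fun k hk => ?_⟩
    rcases eq_or_lt_of_le hk with rfl | hlt
    · exact ⟨z, fun h => hlit (List.mem_cons_of_mem _ (hpvw h))⟩
    · exact hcl k (Fin.le_def.mpr (by rw [Fin.lt_def] at hlt; simp; omega))

theorem satCNF_of_isPath {i : Fin N} (hi : ∀ k, k ≤ i) {pv : List (RVert N M L)}
    (hpv : IsPath adjR pv (.a i) .sink) (hcl : ∀ k, ∃ z, litNode (C k z) ∉ pv) : SatCNF C := by
  refine ⟨fun x => decide ((.uT x : RVert N M L) ∈ pv), fun k => ?_⟩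
  obtain ⟨z, hz⟩ := hcl k
  refine ⟨z, ?_⟩
  have hvar := hpv.uT_mem_or_uF_mem _ (hi (C k z).1)
  unfold litNode at hz
  cases h : (C k z).2 <;> simp_all

theorem satCNF_of_padding_arc (hsub : ∀ e ∈ T, adjR e.1 e.2) (harb : IsInArb .sink T)
    (hstab : StableArb adjR prefR (filtR C) .sink T) {i : Fin (L + 1)} (hi : i ≠ 0)
    {w : RVert N M L} (he : (.dummy i, w) ∈ T) : SatCNF C := by
  obtain ⟨j, hj, rfl⟩ := adjR_dummy_of_ne_zero hi (hsub _ he)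
  obtain ⟨-, p, hp, hd⟩ := (hstab _ he).1
  obtain ⟨i', hi', pv, -, hpv, hcl⟩ := hp.through_clauseGadgets hsub harb hstab (hd _ rfl)
  exact satCNF_of_isPath hi' (hpv.mono fun a b h => hsub (a, b) h) fun k => hcl k (hj k)

theorem dummy_notMem_vertsOf (hunsat : ¬ SatCNF C) (hsub : ∀ e ∈ T, adjR e.1 e.2)
    (harb : IsInArb .sink T) (hstab : StableArb adjR prefR (filtR C) .sink T)
    {i : Fin (L + 1)} (hi : i ≠ 0) : .dummy i ∉ vertsOf .sink T := by
  rintro (h | ⟨⟨u, w⟩, he, h | h⟩)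
  · simp at h
  · obtain rfl : u = .dummy i := h.symm
    exact hunsat (satCNF_of_padding_arc hsub harb hstab hi he)
  · obtain rfl : w = .dummy i := h.symm
    exact hi (eq_zero_of_adjR_dummy (hsub _ he))

end Network

theorem stmt5_general (N M L : ℕ)
    (C : Fin M → Fin 3 → Fin N × Bool) (hunsat : ¬ SatCNF C)
    (T : Set (RVert N M L × RVert N M L))
    (hsub : ∀ e ∈ T, adjR e.1 e.2)
    (harb : IsInArb RVert.sink T)
    (hstab : StableArb adjR prefR (filtR C) RVert.sink T) :
    (∀ i : Fin (L + 1), i ≠ 0 → RVert.dummy i ∉ vertsOf RVert.sink T) ∧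
    (vertsOf RVert.sink T).ncard ≤ 4 * N + 5 * M + 2 := by
  have hpadding : ∀ i : Fin (L + 1), i ≠ 0 → RVert.dummy i ∉ vertsOf RVert.sink T :=
    fun _ hi => dummy_notMem_vertsOf hunsat hsub harb hstab hi
  exact ⟨hpadding, ncard_le_of_dummy_notMem hpadding⟩

/-- if the 3-CNF formula `φ` (encoded by `C`) is unsatisfiable, then every
stable in-arborescence rooted at `r` in `G(φ,L)` contains none of the padding nodes
`d₁,…,d_L`; in particular it has at most `4N+5M+2` nodes. -/
theorem stmt5 (N M L : ℕ) (hN : 0 < N) (hM : 0 < M) (hL : 1 ≤ L)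
    (C : Fin M → Fin 3 → Fin N × Bool) (hunsat : ¬ SatCNF C)
    (T : Set (RVert N M L × RVert N M L))
    (hsub : ∀ e ∈ T, adjR e.1 e.2)
    (harb : IsInArb RVert.sink T)
    (hstab : StableArb adjR prefR (filtR C) RVert.sink T) :
    (∀ i : Fin (L + 1), i ≠ 0 → RVert.dummy i ∉ vertsOf RVert.sink T) ∧
    (vertsOf RVert.sink T).ncard ≤ 4 * N + 5 * M + 2 :=
  stmt5_general N M L C hunsat T hsub harb hstab
end

section
/- In every stable in-arborescence T rooted at r in the network G(φ,L) that contains all four nodes a_i, u^T_i, u^F_i, b_i of a Variable-Gadget H(x_i), T contains exactly one of the two arc sets {(u^T_i,b_i), (u^F_i,a_i), (a_i,u^T_i)} and {(u^F_i,b_i), (u^T_i,a_i), (a_i,u^F_i)}. -/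
/-
Let `w` be the successor of `aᵢ` in `T`, one of `u^Tᵢ, u^Fᵢ`, and `w'` the other one. The nodes
`aᵢ, u^Tᵢ, u^Fᵢ` filter themselves out, so the path from the node each of them points to never
visits it. Hence `w` cannot point back to `aᵢ` and must point to `bᵢ`; `aᵢ` has no second
successor `w'`; and if `w'` pointed to `bᵢ`, then `aᵢ` (whose path `aᵢ w bᵢ …` avoids `w'`) would
be valid for `w'` and preferred to `bᵢ`, contradicting stability. So `w'` points to `aᵢ`.
-/

namespace IsPath

variable {V : Type} {A : V → V → Prop} {p : List V} {v w s : V}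

lemma head_mem (h : IsPath A p v s) : v ∈ p :=
  List.mem_of_mem_head? h.1

lemma exists_cons (h : IsPath A p v s) (hvs : v ≠ s) :
    ∃ w q, p = v :: q ∧ IsPath A q w s ∧ A v w := by
  obtain ⟨hhead, hlast, hchain, hnodup⟩ := h
  match p, hhead, hlast, hchain, hnodup with
  | [x], hhead, hlast, _, _ =>
    simp only [List.head?_cons, List.getLast?_singleton, Option.some.injEq] at hhead hlast
    exact absurd (hhead.symm.trans hlast) hvs
  | x :: y :: q, hhead, hlast, hchain, hnodup =>
    obtain rfl : x = v := by simpa using hhead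
    rw [List.getLast?_cons_cons] at hlast
    obtain ⟨hxy, hchain⟩ := List.isChain_cons_cons.1 hchain
    exact ⟨y, y :: q, rfl, ⟨rfl, hlast, hchain, (List.nodup_cons.1 hnodup).2⟩, hxy⟩

lemma cons (hA : A v w) (h : IsPath A p w s) (hv : v ∉ p) : IsPath A (v :: p) v s := by
  obtain ⟨hhead, hlast, hchain, hnodup⟩ := h
  match p, hhead, hlast, hchain with
  | x :: q, hhead, hlast, hchain =>
    obtain rfl : x = w := by simpa using hhead
    exact ⟨rfl, by rwa [List.getLast?_cons_cons], List.isChain_cons_cons.2 ⟨hA, hchain⟩,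
      List.nodup_cons.2 ⟨hv, hnodup⟩⟩

end IsPath

section Arborescence

variable {V : Type} {r u v w : V} {T : Set (V × V)} {p : List V}

lemma mem_vertsOf_left (h : (u, w) ∈ T) : u ∈ vertsOf r T :=
  Or.inr ⟨_, h, Or.inl rfl⟩

lemma mem_vertsOf_right (h : (u, w) ∈ T) : w ∈ vertsOf r T :=
  Or.inr ⟨_, h, Or.inr rfl⟩

lemma mem_vertsOf_of_isPath (h : IsPath (arcRel T) p v r) : v ∈ vertsOf r T := by
  by_cases hvr : v = r
  · exact Or.inl hvr
  · obtain ⟨w, -, -, -, hvw⟩ := h.exists_cons hvr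
    exact mem_vertsOf_left hvw

namespace IsInArb

variable (harb : IsInArb r T)
include harb

lemma isPath_unique {q : List V} (hp : IsPath (arcRel T) p v r)
    (hq : IsPath (arcRel T) q v r) : p = q :=
  (harb v (mem_vertsOf_of_isPath hp)).unique hp hq

lemma exists_mem_of_ne (hv : v ∈ vertsOf r T) (hvr : v ≠ r) : ∃ w, (v, w) ∈ T := by
  obtain ⟨p, hp, -⟩ := harb v hv
  obtain ⟨w, -, -, -, hvw⟩ := hp.exists_cons hvr
  exact ⟨w, hvw⟩

end IsInArb

namespace StableArb

variable {adj : V → V → Prop} {pref : V → V → V → Prop} {D : V → Set V}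
  (hstab : StableArb adj pref D r T) (harb : IsInArb r T)
include hstab harb

lemma not_mem_of_isPath {x : V} (huw : (u, w) ∈ T) (hp : IsPath (arcRel T) p w r)
    (hx : x ∈ D u) : x ∉ p := by
  obtain ⟨⟨-, q, hq, havoid⟩, -⟩ := hstab (u, w) huw
  rw [harb.isPath_unique hp hq]
  exact havoid x hx

lemma isPath_cons (hu : u ∈ D u) (huw : (u, w) ∈ T) (hp : IsPath (arcRel T) p w r) :
    IsPath (arcRel T) (u :: p) u r :=
  hp.cons huw (hstab.not_mem_of_isPath harb huw hp hu)

lemma eq_of_mem {w₁ w₂ : V} (hu : u ∈ D u) (h₁ : (u, w₁) ∈ T) (h₂ : (u, w₂) ∈ T) :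
    w₁ = w₂ := by
  obtain ⟨p₁, hp₁, -⟩ := harb w₁ (mem_vertsOf_right h₁)
  obtain ⟨p₂, hp₂, -⟩ := harb w₂ (mem_vertsOf_right h₂)
  have hp : p₁ = p₂ := List.cons_injective <|
    harb.isPath_unique (hstab.isPath_cons harb hu h₁ hp₁) (hstab.isPath_cons harb hu h₂ hp₂)
  have hhead : p₁.head? = some w₂ := hp ▸ hp₂.1
  exact Option.some.inj (hp₁.1.symm.trans hhead)

lemma swap_not_mem (hu : u ∈ D u) (hw : w ∈ D w) (huw : (u, w) ∈ T) : (w, u) ∉ T := by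
  intro hwu
  obtain ⟨p, hp, -⟩ := harb u (mem_vertsOf_left huw)
  exact hstab.not_mem_of_isPath harb huw (hstab.isPath_cons harb hw hwu hp) hu
    (List.mem_cons_of_mem w hp.head_mem)

end StableArb

end Arborescence

section VariableGadget

variable {N M L : ℕ} {C : Fin M → Fin 3 → Fin N × Bool} {i : Fin N}
  {T : Set (RVert N M L × RVert N M L)} {u w : RVert N M L}

lemma eq_a_or_eq_b_of_mem (hsub : ∀ e ∈ T, adjR e.1 e.2)
    (hu : outList N M L u = [.a i, .b i]) (huw : (u, w) ∈ T) : w = .a i ∨ w = .b i := by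
  simpa [adjR, hu] using hsub _ huw

lemma gadget_subset {u₁ u₂ : RVert N M L} (hne : u₁ ≠ u₂)
    (hu₁ : outList N M L u₁ = [.a i, .b i]) (hu₂ : outList N M L u₂ = [.a i, .b i])
    (hD₁ : filtR C u₁ = {u₁}) (hD₂ : filtR C u₂ = {u₂})
    (hsub : ∀ e ∈ T, adjR e.1 e.2) (harb : IsInArb .sink T)
    (hstab : StableArb adjR prefR (filtR C) .sink T)
    (hu₂T : u₂ ∈ vertsOf .sink T) (hau₁ : (.a i, u₁) ∈ T) :
    {(u₁, .b i), (u₂, .a i), (.a i, u₁)} ⊆ T ∧ ¬ {(u₂, .b i), (u₁, .a i), (.a i, u₂)} ⊆ T := by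
  have haD : (RVert.a i : RVert N M L) ∈ filtR C (.a i) := rfl
  have hu₁D : u₁ ∈ filtR C u₁ := hD₁ ▸ rfl
  have hu₂ne : u₂ ≠ .a i := by rintro rfl; simp [outList] at hu₂
  have hu₁b : (u₁, .b i) ∈ T := by
    obtain ⟨w, hw⟩ := harb.exists_mem_of_ne (mem_vertsOf_right hau₁)
      (by rintro rfl; simp [outList] at hu₁)
    rcases eq_a_or_eq_b_of_mem hsub hu₁ hw with rfl | rfl
    · exact absurd hw (hstab.swap_not_mem harb haD hu₁D hau₁)
    · exact hw
  have hu₂a : (u₂, .a i) ∈ T := by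
    obtain ⟨w, hw⟩ := harb.exists_mem_of_ne hu₂T (by rintro rfl; simp [outList] at hu₂)
    rcases eq_a_or_eq_b_of_mem hsub hu₂ hw with rfl | rfl
    · exact hw
    exfalso
    obtain ⟨q, hq, -⟩ := harb (.b i) (mem_vertsOf_right hw)
    have hpa : IsPath (arcRel T) (.a i :: u₁ :: q) (.a i) .sink :=
      hstab.isPath_cons harb haD hau₁ (hstab.isPath_cons harb hu₁D hu₁b hq)
    have hvalid : ValidFor adjR (filtR C) .sink T u₂ (.a i) := by
      refine ⟨by simp [adjR, hu₂], _, hpa, ?_⟩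
      simp only [hD₂, Set.mem_singleton_iff, forall_eq]
      have hu₂q : u₂ ∉ q := hstab.not_mem_of_isPath harb hw hq (hD₂ ▸ rfl)
      simp [hu₂ne, hne.symm, hu₂q]
    have hpref : prefR u₂ (.b i) (.a i) := (hstab _ hw).2 (.a i) hvalid (by simp)
    simp [prefR, hu₂] at hpref
  refine ⟨?_, fun h => hne (hstab.eq_of_mem harb haD hau₁ (h (by simp)))⟩
  simp only [Set.insert_subset_iff, Set.singleton_subset_iff]
  exact ⟨hu₁b, hu₂a, hau₁⟩

theorem stmt7_general (N M L : ℕ)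
    (C : Fin M → Fin 3 → Fin N × Bool) (i : Fin N)
    (T : Set (RVert N M L × RVert N M L))
    (hsub : ∀ e ∈ T, adjR e.1 e.2)
    (harb : IsInArb RVert.sink T)
    (hstab : StableArb adjR prefR (filtR C) RVert.sink T)
    (ha : RVert.a i ∈ vertsOf RVert.sink T)
    (huT : RVert.uT i ∈ vertsOf RVert.sink T)
    (huF : RVert.uF i ∈ vertsOf RVert.sink T) :
    Xor'
      (({(RVert.uT i, RVert.b i), (RVert.uF i, RVert.a i), (RVert.a i, RVert.uT i)} :
          Set (RVert N M L × RVert N M L)) ⊆ T)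
      (({(RVert.uF i, RVert.b i), (RVert.uT i, RVert.a i), (RVert.a i, RVert.uF i)} :
          Set (RVert N M L × RVert N M L)) ⊆ T) := by
  obtain ⟨w, haw⟩ := harb.exists_mem_of_ne ha (by simp)
  have hw : w = .uT i ∨ w = .uF i := by simpa [adjR, outList] using hsub _ haw
  rcases hw with rfl | rfl
  · exact Or.inl (gadget_subset (by simp) rfl rfl rfl rfl hsub harb hstab huF haw)
  · exact Or.inr (gadget_subset (by simp) rfl rfl rfl rfl hsub harb hstab huT haw)

/-- every stable in-arborescence `T` rooted at `r` in `G(φ,L)` containing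
all four nodes `aᵢ, u^Tᵢ, u^Fᵢ, bᵢ` of the Variable-Gadget `H(xᵢ)` contains exactly
one of the two arc sets `{(u^Tᵢ,bᵢ), (u^Fᵢ,aᵢ), (aᵢ,u^Tᵢ)}` and
`{(u^Fᵢ,bᵢ), (u^Tᵢ,aᵢ), (aᵢ,u^Fᵢ)}`. -/
theorem stmt7 (N M L : ℕ) (hN : 0 < N) (hM : 0 < M) (hL : 1 ≤ L)
    (C : Fin M → Fin 3 → Fin N × Bool) (i : Fin N)
    (T : Set (RVert N M L × RVert N M L))
    (hsub : ∀ e ∈ T, adjR e.1 e.2)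
    (harb : IsInArb RVert.sink T)
    (hstab : StableArb adjR prefR (filtR C) RVert.sink T)
    (ha : RVert.a i ∈ vertsOf RVert.sink T)
    (huT : RVert.uT i ∈ vertsOf RVert.sink T)
    (huF : RVert.uF i ∈ vertsOf RVert.sink T)
    (hb : RVert.b i ∈ vertsOf RVert.sink T) :
    Xor'
      (({(RVert.uT i, RVert.b i), (RVert.uF i, RVert.a i), (RVert.a i, RVert.uT i)} :
          Set (RVert N M L × RVert N M L)) ⊆ T)
      (({(RVert.uF i, RVert.b i), (RVert.uT i, RVert.a i), (RVert.a i, RVert.uF i)} :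
          Set (RVert N M L × RVert N M L)) ⊆ T) :=
  stmt7_general N M L C i T hsub harb hstab ha huT huF
end VariableGadget
end

section
/- (Union Lemma) Let S be a spanning in-arborescence rooted at r in a network. If S is strongly stable on a set A ⊆ V∖{r} and also strongly stable on a set B ⊆ V∖{r}, then S is strongly stable on A ∪ B. -/
/-- A network: a finite digraph with a sink `r` having no outgoing arcs, in which every
node has a directed path to `r`, together with a strict linear preference order
(`pref v w w'` : `v` strictly prefers `w` to `w'`) on the out-neighbours of each node. -/
structure Network (V : Type) where
  adj : V → V → Prop
  r : V
  sink_no_out : ∀ w, ¬ adj r w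
  reach : ∀ v, ∃ p, IsPath adj p v r
  pref : V → V → V → Prop
  pref_adj : ∀ v w w', pref v w w' → adj v w ∧ adj v w'
  pref_irrefl : ∀ v w, ¬ pref v w w
  pref_trans : ∀ v, Transitive (pref v)
  pref_total : ∀ v w w', adj v w → adj v w' → w ≠ w' → pref v w w' ∨ pref v w' w

/-- `S` is a spanning in-arborescence rooted at `r`: every node of `V` has a unique
directed path in `S` to `r`. -/
def IsSpanningArb {V : Type} (r : V) (S : Set (V × V)) : Prop :=
  ∀ v : V, ∃! p : List V, IsPath (arcRel S) p v r

/-- The vertex set of the `Q`-subtree of `v` in `S`, i.e. of the maximal subtree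
rooted at `v` of the forest `S[Q]` (the arcs of `S` with both endpoints in `Q`). -/
def Subtree {V : Type} (S : Set (V × V)) (Q : Set V) (v : V) : Set V :=
  {u | Relation.ReflTransGen (fun a b => (a, b) ∈ S ∧ a ∈ Q ∧ b ∈ Q) u v}

/-- `S` is strongly stable on `O`: every node `v ∈ O` prefers its parent in `S` to
every other out-neighbour of `v` lying outside the `O`-subtree of `v` in `S`. -/
def StronglyStable {V : Type} (N : Network V) (S : Set (V × V)) (O : Set V) : Prop :=
  ∀ v ∈ O, ∀ w, (v, w) ∈ S →
    ∀ w', N.adj v w' → w' ≠ w → w' ∉ Subtree S O v → N.pref v w w'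

/-- The set of arcs of `S` whose tail lies in `U` (denoted `𝒜⁺_S(U)`). -/
def arcsFrom {V : Type} (S : Set (V × V)) (U : Set V) : Set (V × V) :=
  {e ∈ S | e.1 ∈ U}

/-- `S` is a skeleton of `T` with respect to `O`: for every maximal subtree `F` of the
forest `S[O]` (identified by its root `ρ`, a node of `O` whose parent in `S` is not
in `O`), either `𝒜⁺_S(V(F)) ⊆ T` or `V(F) ∩ V(T) = ∅`. -/
def IsSkeleton {V : Type} (r : V) (S T : Set (V × V)) (O : Set V) : Prop :=
  ∀ ρ ∈ O, (∀ w, (ρ, w) ∈ S → w ∉ O) →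
    (arcsFrom S (Subtree S O ρ) ⊆ T) ∨ (∀ u ∈ Subtree S O ρ, u ∉ vertsOf r T)

theorem Subtree.mono {V : Type} (S : Set (V × V)) {Q Q' : Set V} (hQ : Q ⊆ Q') (v : V) :
    Subtree S Q v ⊆ Subtree S Q' v :=
  fun u => Relation.ReflTransGen.mono (fun _ _ h => ⟨h.1, hQ h.2.1, hQ h.2.2⟩) u v

/-- Enlarging the set only enlarges the subtrees, so fewer out-neighbours are excluded. -/
theorem StronglyStable.union {V : Type} {N : Network V} {S : Set (V × V)} {A B : Set V}
    (hA : StronglyStable N S A) (hB : StronglyStable N S B) :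
    StronglyStable N S (A ∪ B) := by
  rintro v (hvA | hvB) w hw w' hadj hne hout
  · exact hA v hvA w hw w' hadj hne fun h => hout (Subtree.mono S Set.subset_union_left v h)
  · exact hB v hvB w hw w' hadj hne fun h => hout (Subtree.mono S Set.subset_union_right v h)

theorem stmt8_general {V : Type} (N : Network V) (S : Set (V × V))
    (A B : Set V)
    (hSA : StronglyStable N S A) (hSB : StronglyStable N S B) :
    StronglyStable N S (A ∪ B) :=
  hSA.union hSB

/-- Union Lemma: if a spanning in-arborescence `S` rooted at `r` in a
network is strongly stable on `A ⊆ V \ {r}` and on `B ⊆ V \ {r}`, then it is strongly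
stable on `A ∪ B`. -/
theorem stmt8 {V : Type} [Fintype V] (N : Network V) (S : Set (V × V))
    (hS : ∀ e ∈ S, N.adj e.1 e.2) (hspan : IsSpanningArb N.r S)
    (A B : Set V) (hA : ∀ v ∈ A, v ≠ N.r) (hB : ∀ v ∈ B, v ≠ N.r)
    (hSA : StronglyStable N S A) (hSB : StronglyStable N S B) :
    StronglyStable N S (A ∪ B) :=
  stmt8_general N S A B hSA hSB
end

section
/- Let V be a finite vertex set with r ∈ V, let R be a directed graph on V without self-loops in which r has no outgoing arc and every other vertex has exactly one outgoing arc, let S be a spanning in-arborescence rooted at r, and let 𝕆 ⊆ V∖{r} be such that every vertex of 𝕆 has the same outgoing arc in R as in S. For w ∈ 𝕆, let z(w) denote the first vertex not in 𝕆 reached by following arcs of S starting from w (well-defined since r ∉ 𝕆). Suppose that for every arc (v,w) of R with v ∉ 𝕆 and w ∈ 𝕆 we have v ≠ z(w). Then every directed cycle of R contains at least two distinct vertices not in 𝕆. -/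
/-- `z` is the first vertex not in `O` reached by following arcs of `S` starting
from `w`: there is a directed walk in `S` from `w` to `z` all of whose vertices
except the last lie in `O`, with `z ∉ O`. -/
def FirstExit {V : Type} (S : Set (V × V)) (O : Set V) (w z : V) : Prop :=
  ∃ p : List V, p.Chain' (arcRel S) ∧ p.head? = some w ∧ p.getLast? = some z ∧
    z ∉ O ∧ ∀ x ∈ p.dropLast, x ∈ O

theorem List.IsChain.append_singleton_imp {α : Type*} {R R' : α → α → Prop} {l : List α} {z : α}
    (H : ∀ a ∈ l, ∀ b, R a b → R' a b) (h : List.IsChain R (l ++ [z])) :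
    List.IsChain R' (l ++ [z]) := by
  rw [List.isChain_append] at h ⊢
  obtain ⟨hl, -, hlast⟩ := h
  exact ⟨hl.imp_of_mem_imp fun a b ha _ => H a ha b, List.isChain_singleton z,
    fun x hx y hy => H x (List.mem_of_getLast? hx) y (hlast x hx y hy)⟩

theorem Cycle.chain_coe_of_isChain {α : Type*} {R : α → α → Prop} {l : List α} (hl : l ≠ [])
    (hchain : List.IsChain R l) (hwrap : ∀ x ∈ l.getLast?, ∀ y ∈ l.head?, R x y) :
    Cycle.Chain R (l : Cycle α) := by
  rw [Cycle.chain_ne_nil R hl, List.isChain_cons]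
  exact ⟨hwrap _ (List.getLast?_eq_some_getLast hl), hchain⟩

theorem Cycle.exists_eq_coe_cons_of_mem {α : Type*} {c : Cycle α} {a : α} (ha : a ∈ c) :
    ∃ l : List α, c = ((a :: l : List α) : Cycle α) := by
  induction c using Quotient.inductionOn' with
  | h l =>
    obtain ⟨l₁, l₂, rfl⟩ := List.append_of_mem (Cycle.mem_coe_iff.mp ha)
    exact ⟨l₂ ++ l₁, Cycle.coe_eq_coe.mpr List.isRotated_append⟩

theorem Cycle.Chain.exists_rel_of_mem {α : Type*} {R : α → α → Prop} {c : Cycle α}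
    (hc : c.Chain R) {a : α} (ha : a ∈ c) : ∃ b ∈ c, R a b := by
  obtain ⟨l, rfl⟩ := Cycle.exists_eq_coe_cons_of_mem ha
  rw [Cycle.chain_coe_cons] at hc
  cases l with
  | nil => exact ⟨a, ha, List.isChain_pair.mp hc⟩
  | cons b t => exact ⟨b, by simp, (List.isChain_cons_cons.mp hc).1⟩

theorem Relation.ReflTransGen.mem_of_closed {α : Type*} {R : α → α → Prop} {s : Set α}
    (hs : ∀ a ∈ s, ∀ b, R a b → b ∈ s) {a b : α} (hab : Relation.ReflTransGen R a b)
    (ha : a ∈ s) : b ∈ s := by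
  induction hab with
  | refl => exact ha
  | tail _ hbc ih => exact hs _ ih _ hbc

theorem IsSpanningArb.reflTransGen {V : Type} {r : V} {S : Set (V × V)}
    (hS : IsSpanningArb r S) (v : V) : Relation.ReflTransGen (arcRel S) v r := by
  obtain ⟨p, ⟨hhead, hlast, hchain, -⟩, -⟩ := hS v
  obtain ⟨t, rfl⟩ : ∃ t, p = v :: t := List.head?_eq_some_iff.mp hhead
  exact List.relationReflTransGen_of_exists_isChain_cons t hchain
    ((List.getLast_eq_iff_getLast?_eq_some _).mpr hlast)

section CycleOfSuccessor

variable {V : Type} {next : V → Option V} {S : Set (V × V)} {O : Set V}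

theorem exists_mem_not_mem_of_chain {r : V} (hS : IsSpanningArb r S) (hOr : r ∉ O)
    (hagree : ∀ v ∈ O, ∀ w, (v, w) ∈ S → next v = some w) {c : Cycle V}
    (hc : c.Chain (fun a b => next a = some b)) {a : V} (ha : a ∈ c) : ∃ v ∈ c, v ∉ O := by
  by_contra! hcO
  have hclosed : ∀ x ∈ {x | x ∈ c}, ∀ y, arcRel S x y → y ∈ {x | x ∈ c} := by
    intro x hx y hxy
    obtain ⟨y', hy', hxy'⟩ := hc.exists_rel_of_mem hx
    rw [hagree x (hcO x hx) y hxy, Option.some_inj] at hxy'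
    exact hxy' ▸ hy'
  exact hOr (hcO r ((hS.reflTransGen a).mem_of_closed hclosed ha))

theorem exists_ne_not_mem_of_chain (hloop : ∀ v, next v ≠ some v)
    (hagree : ∀ v ∈ O, ∀ w, next v = some w → (v, w) ∈ S)
    (hz : ∀ v w z, v ∉ O → next v = some w → w ∈ O → FirstExit S O w z → v ≠ z)
    {c : Cycle V} (hc : c.Chain (fun a b => next a = some b)) (hnd : c.Nodup)
    {v : V} (hv : v ∈ c) (hvO : v ∉ O) : ∃ u ∈ c, u ≠ v ∧ u ∉ O := by
  by_contra! hcO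
  obtain ⟨l, rfl⟩ := Cycle.exists_eq_coe_cons_of_mem hv
  rw [Cycle.chain_coe_cons] at hc
  rw [Cycle.nodup_coe_iff, List.nodup_cons] at hnd
  have hlO : ∀ x ∈ l, x ∈ O := fun x hx =>
    hcO x (by simp [hx]) (fun hxv => hnd.1 (hxv ▸ hx))
  cases l with
  | nil => exact hloop v (List.isChain_cons_cons.mp hc).1
  | cons w t =>
    obtain ⟨hvw, hwv⟩ := List.isChain_cons_cons.mp hc
    have hwalk : List.IsChain (arcRel S) ((w :: t) ++ [v]) :=
      hwv.append_singleton_imp fun x hx y => hagree x (hlO x hx) y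
    have hexit : FirstExit S O w v :=
      ⟨(w :: t) ++ [v], hwalk, rfl, List.getLast?_concat, hvO, by
        rw [List.dropLast_concat]; exact hlO⟩
    exact hz v w v hvO hvw (hlO w List.mem_cons_self) hexit rfl

end CycleOfSuccessor

theorem stmt12_general {V : Type} (r : V) (next : V → Option V)
    (hloop : ∀ v, next v ≠ some v)
    (S : Set (V × V)) (hS : IsSpanningArb r S)
    (O : Set V) (hOr : r ∉ O)
    (hagree : ∀ v ∈ O, ∀ w, next v = some w ↔ (v, w) ∈ S)
    (hz : ∀ v w z, v ∉ O → next v = some w → w ∈ O → FirstExit S O w z → v ≠ z)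
    (l : List V) (hl : l ≠ []) (hnd : l.Nodup)
    (hchain : l.Chain' (fun a b => next a = some b))
    (hwrap : ∀ x ∈ l.getLast?, ∀ y ∈ l.head?, next x = some y) :
    ∃ u v, u ∈ l ∧ v ∈ l ∧ u ≠ v ∧ u ∉ O ∧ v ∉ O := by
  have hc : Cycle.Chain (fun a b => next a = some b) (l : Cycle V) :=
    Cycle.chain_coe_of_isChain hl hchain hwrap
  obtain ⟨v, hv, hvO⟩ := exists_mem_not_mem_of_chain hS hOr
    (fun v hv w => (hagree v hv w).mpr) hc (Cycle.mem_coe_iff.mpr (List.head_mem hl))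
  obtain ⟨u, hu, huv, huO⟩ := exists_ne_not_mem_of_chain hloop
    (fun v hv w => (hagree v hv w).mp) hz hc (Cycle.nodup_coe_iff.mpr hnd) hv hvO
  exact ⟨u, v, Cycle.mem_coe_iff.mp hu, Cycle.mem_coe_iff.mp hv, huv, huO, hvO⟩

/-- let `R` (given by `next`) be a digraph on a finite vertex set `V`
without self-loops in which `r` has no outgoing arc and every other vertex has exactly
one outgoing arc, let `S` be a spanning in-arborescence rooted at `r`, and let
`O ⊆ V \ {r}` be such that every vertex of `O` has the same outgoing arc in `R` as in
`S`.  If for every arc `(v,w)` of `R` with `v ∉ O` and `w ∈ O` the vertex `v` differs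
from `z(w)`, the first vertex outside `O` reached from `w` along `S`, then every
directed cycle of `R` contains at least two distinct vertices not in `O`. -/
theorem stmt12 {V : Type} [Fintype V] (r : V) (next : V → Option V)
    (hr : next r = none) (hloop : ∀ v, next v ≠ some v)
    (hout : ∀ v, v ≠ r → (next v).isSome)
    (S : Set (V × V)) (hS : IsSpanningArb r S)
    (O : Set V) (hOr : r ∉ O)
    (hagree : ∀ v ∈ O, ∀ w, next v = some w ↔ (v, w) ∈ S)
    (hz : ∀ v w z, v ∉ O → next v = some w → w ∈ O → FirstExit S O w z → v ≠ z)
    (l : List V) (hl : l ≠ []) (hnd : l.Nodup)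
    (hchain : l.Chain' (fun a b => next a = some b))
    (hwrap : ∀ x ∈ l.getLast?, ∀ y ∈ l.head?, next x = some y) :
    ∃ u v, u ∈ l ∧ v ∈ l ∧ u ≠ v ∧ u ∉ O ∧ v ∉ O :=
  stmt12_general r next hloop S hS O hOr hagree hz l hl hnd hchain hwrap
end
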